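/- For 1 ≤ k ≤ N, define the N×N matrix E^{(k)} = I + T^{(k)}, where T^{(k)}_{kj} = 2·(−1)^{k−j+1} for j < k, T^{(k)}_{kk} = 0, T^{(k)}_{kj} = 2·(−1)^{j−k} for j > k, and all other rows of T^{(k)} are zero. Let H^{(k)} = E^{(1)}⋯E^{(k)}. Then for 1 ≤ k ≤ N and 1 ≤ m ≤ N − k: H^{(k)}_{i,k+m} = 2·3^{k−i}·(−1)^{i+k+m} for 1 ≤ i ≤ k; H^{(k)}_{i,k+m} = 0 for k+1 ≤ i ≤ N with i ≠ k+m; and H^{(k)}_{k+m,k+m} = 1. -/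

import Mathlib

open Matrix BigOperators

/-- `Emat N k` is the matrix `I + T^(k)` (0-indexed `k`): row `k` of `T^(k)` has entries
`2·(-1)^(k-j+1)` for `j < k`, `0` at `j = k`, and `2·(-1)^(j-k)` for `j > k`;
all other rows of `T^(k)` are zero. -/
def Emat (N : ℕ) (k : ℕ) : Matrix (Fin N) (Fin N) ℝ :=
  fun i j => (if i = j then 1 else 0) +
    (if (i : ℕ) = k then
       (if (j : ℕ) < k then 2 * (-1 : ℝ) ^ (k - (j : ℕ) + 1)
        else if k < (j : ℕ) then 2 * (-1 : ℝ) ^ ((j : ℕ) - k)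
        else 0)
     else 0)

/-- The ordered product `H^(k) = E^(1) E^(2) ⋯ E^(k)`. -/
noncomputable def Hmat (N k : ℕ) : Matrix (Fin N) (Fin N) ℝ :=
  ((List.range k).map (Emat N)).prod

/-!
Right multiplication by `E^(k)` adds `2·(-1)^(c-k)` times column `k` to every column `c > k`
and leaves those columns otherwise unchanged. So, by induction on `k`, each column `c ≥ k` of
`H^(k)` is the unit vector `e_c` plus a part supported on rows `< k`; passing to `k + 1`, the
new entry in row `k` is `2·(-1)^(c-k)`, and every entry in a row `i < k` gets multiplied by
`1 + 2 = 3`, since the sign of the added term `2·3^(k-1-i)·(-1)^(i+k)·2·(-1)^(c-k)` agrees with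
that of the old entry.
-/

theorem neg_one_pow_sub_eq_pow_add {R : Type*} [Monoid R] [HasDistribNeg R] {m n : ℕ}
    (h : m ≤ n) : (-1 : R) ^ (n - m) = (-1) ^ (m + n) := by
  rw [show m + n = 2 * m + (n - m) by omega, pow_add, pow_mul, neg_one_sq, one_pow, one_mul]

theorem Hmat_zero (N : ℕ) : Hmat N 0 = 1 := rfl

theorem Hmat_succ (N k : ℕ) : Hmat N (k + 1) = Hmat N k * Emat N k := by
  rw [Hmat, List.range_succ, List.map_append, List.prod_append, List.map_singleton,
    List.prod_singleton, Hmat]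

theorem mul_Emat_apply_of_lt {N k : ℕ} (A : Matrix (Fin N) (Fin N) ℝ) (hk : k < N)
    (i c : Fin N) (hc : k < (c : ℕ)) :
    (A * Emat N k) i c = A i c + A i ⟨k, hk⟩ * (2 * (-1) ^ ((c : ℕ) - k)) := by
  have hEmat : ∀ j : Fin N, Emat N k j c =
      (if j = c then 1 else 0) + if j = ⟨k, hk⟩ then 2 * (-1) ^ ((c : ℕ) - k) else 0 := by
    intro j
    simp only [Emat, Fin.ext_iff, not_lt_of_gt hc, hc, if_false, if_true]
  simp only [mul_apply, hEmat, mul_add, mul_ite, mul_one, mul_zero, Finset.sum_add_distrib,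
    Finset.sum_ite_eq', Finset.mem_univ, if_true]

def HasColumnShape {N : ℕ} (A : Matrix (Fin N) (Fin N) ℝ) (k : ℕ) (c : Fin N) : Prop :=
  (∀ i : Fin N, (i : ℕ) < k → A i c = 2 * 3 ^ (k - 1 - (i : ℕ)) * (-1 : ℝ) ^ ((i : ℕ) + (c : ℕ))) ∧
    (∀ i : Fin N, k ≤ (i : ℕ) → i ≠ c → A i c = 0) ∧ A c c = 1

theorem hasColumnShape_one {N : ℕ} (c : Fin N) : HasColumnShape (1 : Matrix _ _ ℝ) 0 c :=
  ⟨fun _ hi => absurd hi (Nat.not_lt_zero _), fun _ _ hic => one_apply_ne hic, one_apply_eq c⟩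

theorem HasColumnShape.mul_Emat {N k : ℕ} {A : Matrix (Fin N) (Fin N) ℝ} {c : Fin N}
    (hk : k < N) (hAc : HasColumnShape A k c) (hAk : HasColumnShape A k ⟨k, hk⟩)
    (hc : k < (c : ℕ)) : HasColumnShape (A * Emat N k) (k + 1) c := by
  obtain ⟨hAc_top, hAc_bot, hAc_diag⟩ := hAc
  obtain ⟨hAk_top, hAk_bot, hAk_diag⟩ := hAk
  have hck : c ≠ ⟨k, hk⟩ := fun h => by simp [h] at hc
  refine ⟨fun i hi => ?_, fun i hi hic => ?_, ?_⟩
  · rw [mul_Emat_apply_of_lt A hk i c hc]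
    rcases (Nat.lt_succ_iff_lt_or_eq.mp hi) with hik | hik
    · have hsign : (-1 : ℝ) ^ ((i : ℕ) + k) * (-1) ^ ((c : ℕ) - k) = (-1) ^ ((i : ℕ) + c) := by
        rw [← pow_add]; congr 1; omega
      rw [hAc_top i hik, hAk_top i hik, show k + 1 - 1 - (i : ℕ) = k - 1 - i + 1 by omega]
      linear_combination (4 * (3 : ℝ) ^ (k - 1 - (i : ℕ))) * hsign
    · have hi_eq : i = ⟨k, hk⟩ := Fin.ext hik
      rw [hAc_bot i hik.ge (hi_eq ▸ hck.symm), hi_eq, hAk_diag,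
        neg_one_pow_sub_eq_pow_add hc.le]
      simp
  · have hik : i ≠ ⟨k, hk⟩ := fun h => by simp [h] at hi
    rw [mul_Emat_apply_of_lt A hk i c hc, hAc_bot i (by omega) hic, hAk_bot i (by omega) hik]
    ring
  · rw [mul_Emat_apply_of_lt A hk c c hc, hAc_diag, hAk_bot c hc.le hck]
    ring

theorem stmt_15_general (N k : ℕ) :
    ∀ c : Fin N, k ≤ (c : ℕ) →
      (∀ i : Fin N, (i : ℕ) < k →
          Hmat N k i c = 2 * 3 ^ (k - 1 - (i : ℕ)) * (-1 : ℝ) ^ ((i : ℕ) + (c : ℕ))) ∧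
      (∀ i : Fin N, k ≤ (i : ℕ) → i ≠ c → Hmat N k i c = 0) ∧
      Hmat N k c c = 1 := by
  induction k with
  | zero => exact fun c _ => Hmat_zero N ▸ hasColumnShape_one c
  | succ k ih =>
    intro c hc
    have hk : k < N := by omega
    rw [Hmat_succ]
    exact HasColumnShape.mul_Emat hk (ih c (by omega)) (ih ⟨k, hk⟩ le_rfl) hc

theorem stmt_15 (N k : ℕ) (hk1 : 1 ≤ k) (hkN : k ≤ N) :
    ∀ c : Fin N, k ≤ (c : ℕ) →
      (∀ i : Fin N, (i : ℕ) < k →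
          Hmat N k i c = 2 * 3 ^ (k - 1 - (i : ℕ)) * (-1 : ℝ) ^ ((i : ℕ) + (c : ℕ))) ∧
      (∀ i : Fin N, k ≤ (i : ℕ) → i ≠ c → Hmat N k i c = 0) ∧
      Hmat N k c c = 1 :=
  stmt_15_general N k
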